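/- arXiv:1708.05022 — 2 statements merged into one kernel-verified Lean document; each statement's English description precedes it below -/
import Mathlib

section
/- Let $0<\alpha<1$ and let $X_n$ be independent $\{0,1\}$-valued random variables with $\mathbb{E}[X_n]=n^{-\alpha}$. Define the counting function $a_n(\omega)$ as the smallest integer $m$ with $X_1(\omega)+\cdots+X_m(\omega)=n$. Then almost surely there exists a constant $C_\omega>0$ such that for all sufficiently large $n$, $C_\omega^{-1} n^{1/(1-\alpha)} \le a_n(\omega) \le C_\omega n^{1/(1-\alpha)}$. -/
open MeasureTheory ProbabilityTheory Filter Finset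

/-!
Write `S m = X 1 + ⋯ + X m`. For indicators `Var ≤ E`, so Chebyshev gives
`P(|S m - E S m| ≥ E S m / 2) ≤ 4 / E S m`, and `E S m = ∑_{k ≤ m} k^(-α) ≍ m^(1-α)`.
Along the dyadic times `m = 2^j` these bounds are geometric, hence summable, so by Borel–Cantelli
`S (2^j) ≍ 2^(j(1-α))` almost surely; monotonicity of `S` extends this to `S m ≍ m^(1-α)`.
Since `S (a n) = n`, inverting gives `a n ≍ n^(1/(1-α))`.
-/

theorem mul_rpow_sub_one_le_add_one_rpow_sub_rpow {p x : ℝ} (hp0 : 0 ≤ p) (hp1 : p ≤ 1)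
    (hx : 0 ≤ x) : p * (x + 1) ^ (p - 1) ≤ (x + 1) ^ p - x ^ p := by
  have hx1 : 0 < x + 1 := by linarith
  have hinv : (x + 1)⁻¹ ≤ 1 := inv_le_one_of_one_le₀ (by linarith)
  have hbern : (1 + -(x + 1)⁻¹) ^ p ≤ 1 + p * -(x + 1)⁻¹ :=
    rpow_one_add_le_one_add_mul_self (by linarith) hp0 hp1
  have hsplit : x = (x + 1) * (1 + -(x + 1)⁻¹) := by field_simp; ring
  suffices x ^ p ≤ (x + 1) ^ p - p * (x + 1) ^ (p - 1) by linarith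
  calc x ^ p = (x + 1) ^ p * (1 + -(x + 1)⁻¹) ^ p := by
        rw [← Real.mul_rpow hx1.le (by linarith), ← hsplit]
    _ ≤ (x + 1) ^ p * (1 + p * -(x + 1)⁻¹) := by gcongr
    _ = (x + 1) ^ p - p * (x + 1) ^ (p - 1) := by
        rw [Real.rpow_sub_one hx1.ne']; ring

section PowerSums

variable {α : ℝ}

theorem rpow_one_sub_le_sum_Icc_rpow_neg (hα0 : 0 ≤ α) (hα1 : α < 1) (m : ℕ) :
    (m : ℝ) ^ (1 - α) ≤ ∑ k ∈ Icc 1 m, (k : ℝ) ^ (-α) := by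
  rcases m.eq_zero_or_pos with rfl | hm
  · simp [Real.zero_rpow (by linarith : (1 : ℝ) - α ≠ 0)]
  calc (m : ℝ) ^ (1 - α) = ∑ _k ∈ Icc 1 m, (m : ℝ) ^ (-α) := by
        rw [sum_const, Nat.card_Icc, nsmul_eq_mul, sub_eq_add_neg,
          Real.rpow_add (by positivity), Real.rpow_one, Nat.add_sub_cancel]
    _ ≤ ∑ k ∈ Icc 1 m, (k : ℝ) ^ (-α) := by
        refine sum_le_sum fun k hk => ?_
        rw [mem_Icc] at hk
        exact Real.rpow_le_rpow_of_nonpos (by exact_mod_cast hk.1) (by exact_mod_cast hk.2)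
          (by linarith)

theorem sum_Icc_rpow_neg_le (hα0 : 0 ≤ α) (hα1 : α < 1) (m : ℕ) :
    ∑ k ∈ Icc 1 m, (k : ℝ) ^ (-α) ≤ (m : ℝ) ^ (1 - α) / (1 - α) := by
  have hp : 0 < 1 - α := by linarith
  induction m with
  | zero => simp [Real.zero_rpow hp.ne']
  | succ m ih =>
    have hstep := mul_rpow_sub_one_le_add_one_rpow_sub_rpow hp.le (by linarith) m.cast_nonneg
    rw [sub_sub_cancel_left] at hstep
    rw [sum_Icc_succ_top (by omega), le_div_iff₀ hp]
    push_cast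
    rw [le_div_iff₀ hp] at ih
    linarith

end PowerSums

theorem Monotone.eventually_rpow_bounds_of_dyadic {f : ℕ → ℝ} (hf : Monotone f) {p c C : ℝ}
    (hp0 : 0 ≤ p) (hp1 : p ≤ 1) (hc : 0 ≤ c) (hC : 0 ≤ C)
    (h : ∀ᶠ j in atTop,
      c * ((2 ^ j : ℕ) : ℝ) ^ p ≤ f (2 ^ j) ∧ f (2 ^ j) ≤ C * ((2 ^ j : ℕ) : ℝ) ^ p) :
    ∀ᶠ m : ℕ in atTop, c / 2 * (m : ℝ) ^ p ≤ f m ∧ f m ≤ 2 * C * (m : ℝ) ^ p := by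
  obtain ⟨J, hJ⟩ := eventually_atTop.1 h
  refine eventually_atTop.2 ⟨2 ^ J, fun m hm => ?_⟩
  have hm0 : m ≠ 0 := Nat.one_le_iff_ne_zero.1 (Nat.one_le_two_pow.trans hm)
  set j := Nat.log 2 m
  have hjm : 2 ^ j ≤ m := Nat.pow_log_le_self 2 hm0
  have hmj : m < 2 ^ (j + 1) := Nat.lt_pow_succ_log_self one_lt_two m
  have hJj : J ≤ j := Nat.le_log_of_pow_le one_lt_two hm
  have h2p : (2 : ℝ) ^ p ≤ 2 := by
    simpa using Real.rpow_le_rpow_of_exponent_le one_le_two hp1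
  have hlow : (m : ℝ) / 2 ≤ ((2 ^ j : ℕ) : ℝ) := by
    have : (m : ℝ) < ((2 ^ (j + 1) : ℕ) : ℝ) := by exact_mod_cast hmj
    push_cast [pow_succ] at this ⊢
    linarith
  have hupp : ((2 ^ (j + 1) : ℕ) : ℝ) ≤ 2 * m := by
    have : ((2 ^ j : ℕ) : ℝ) ≤ m := by exact_mod_cast hjm
    push_cast [pow_succ] at this ⊢
    linarith
  constructor
  · calc c / 2 * (m : ℝ) ^ p = c * ((m : ℝ) ^ p / 2) := by ring
      _ ≤ c * ((m : ℝ) ^ p / 2 ^ p) := by gcongr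
      _ = c * ((m : ℝ) / 2) ^ p := by rw [Real.div_rpow (by positivity) zero_le_two]
      _ ≤ c * ((2 ^ j : ℕ) : ℝ) ^ p := by gcongr
      _ ≤ f (2 ^ j) := (hJ j hJj).1
      _ ≤ f m := hf hjm
  · calc f m ≤ f (2 ^ (j + 1)) := hf hmj.le
      _ ≤ C * ((2 ^ (j + 1) : ℕ) : ℝ) ^ p := (hJ (j + 1) (by omega)).2
      _ ≤ C * (2 * (m : ℝ)) ^ p := by gcongr
      _ = C * (2 ^ p * (m : ℝ) ^ p) := by rw [Real.mul_rpow zero_le_two (by positivity)]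
      _ ≤ 2 * C * (m : ℝ) ^ p := by
          rw [mul_comm 2 C, mul_assoc]
          gcongr

theorem exists_rpow_one_div_bounds_of_comp_eq_cast {s : ℕ → ℝ} {a : ℕ → ℕ} {p c C : ℝ}
    (hp : 0 < p) (hc : 0 < c) (hC : 0 < C)
    (hs : ∀ᶠ m : ℕ in atTop, c * (m : ℝ) ^ p ≤ s m ∧ s m ≤ C * (m : ℝ) ^ p)
    (hsa : ∀ n, s (a n) = n) (ha : Tendsto a atTop atTop) :
    ∃ D > (0 : ℝ), ∀ᶠ n : ℕ in atTop,
      D⁻¹ * (n : ℝ) ^ (1 / p) ≤ a n ∧ (a n : ℝ) ≤ D * (n : ℝ) ^ (1 / p) := by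
  set D := max (C ^ (1 / p)) (c⁻¹ ^ (1 / p))
  have hD : 0 < D := lt_max_of_lt_left (by positivity)
  refine ⟨D, hD, (ha.eventually hs).mono fun n ⟨hlow, hupp⟩ => ?_⟩
  rw [hsa] at hlow hupp
  have han : (0 : ℝ) ≤ a n := (a n).cast_nonneg
  have hroot : ∀ x : ℝ, 0 ≤ x → (x ^ p) ^ (1 / p) = x := fun x hx => by
    rw [one_div, Real.rpow_rpow_inv hx hp.ne']
  constructor
  · rw [inv_mul_le_iff₀ hD]
    calc (n : ℝ) ^ (1 / p) ≤ (C * (a n : ℝ) ^ p) ^ (1 / p) := by gcongr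
      _ = C ^ (1 / p) * a n := by rw [Real.mul_rpow hC.le (by positivity), hroot _ han]
      _ ≤ D * a n := by gcongr; exact le_max_left _ _
  · calc (a n : ℝ) = ((a n : ℝ) ^ p) ^ (1 / p) := (hroot _ han).symm
      _ ≤ (c⁻¹ * n) ^ (1 / p) := by
          gcongr
          rwa [le_inv_mul_iff₀ hc]
      _ = c⁻¹ ^ (1 / p) * (n : ℝ) ^ (1 / p) := Real.mul_rpow (by positivity) (by positivity)
      _ ≤ D * (n : ℝ) ^ (1 / p) := by gcongr; exact le_max_right _ _

section ZeroOne

variable {x : ℕ → ℝ}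

theorem monotone_sum_Icc (hx : ∀ k, 0 ≤ x k) : Monotone fun m => ∑ k ∈ Icc 1 m, x k :=
  fun _ _ hmm' => sum_le_sum_of_subset_of_nonneg (Icc_subset_Icc_right hmm') fun k _ _ => hx k

theorem sum_Icc_le_self (hx : ∀ k, x k ≤ 1) (m : ℕ) : ∑ k ∈ Icc 1 m, x k ≤ m := by
  simpa using sum_le_card_nsmul (Icc 1 m) x 1 fun k _ => hx k

theorem sum_Icc_eq_card_filter (hx : ∀ k, x k = 0 ∨ x k = 1) (m : ℕ) :
    ∑ k ∈ Icc 1 m, x k = #{k ∈ Icc 1 m | x k = 1} := by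
  rw [← sum_boole]
  refine sum_congr rfl fun k _ => ?_
  rcases hx k with h | h <;> simp [h]

theorem exists_sum_Icc_eq_of_le (hx : ∀ k, x k = 0 ∨ x k = 1) {n m : ℕ}
    (h : (n : ℝ) ≤ ∑ k ∈ Icc 1 m, x k) : ∃ m', ∑ k ∈ Icc 1 m', x k = n := by
  induction m with
  | zero => exact ⟨0, by simp_all⟩
  | succ m ih =>
    by_cases hn : (n : ℝ) ≤ ∑ k ∈ Icc 1 m, x k
    · exact ih hn
    refine ⟨m + 1, ?_⟩
    rw [sum_Icc_succ_top (by omega)] at h ⊢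
    rw [sum_Icc_eq_card_filter hx] at h hn ⊢
    rcases hx (m + 1) with h1 | h1 <;> rw [h1] at h ⊢
    · exact absurd (by simpa using h) hn
    · have : n = #{k ∈ Icc 1 m | x k = 1} + 1 := by
        exact_mod_cast le_antisymm (by exact_mod_cast h) (by exact_mod_cast not_le.1 hn)
      simp [this]

end ZeroOne

section Concentration

variable {Ω : Type*} [MeasurableSpace Ω] {μ : Measure Ω} [IsProbabilityMeasure μ]

theorem variance_le_integral_of_zero_or_one {Y : Ω → ℝ} (hY : AEStronglyMeasurable Y μ)
    (hval : ∀ ω, Y ω = 0 ∨ Y ω = 1) : Var[Y; μ] ≤ μ[Y] :=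
  calc Var[Y; μ] ≤ ∫ ω, (Y ^ 2) ω ∂μ := variance_le_expectation_sq hY
    _ = μ[Y] := integral_congr_ae <| ae_of_all _ fun ω => by
        rcases hval ω with h | h <;> simp [h]

theorem memLp_two_of_zero_or_one {Y : Ω → ℝ} (hY : AEStronglyMeasurable Y μ)
    (hval : ∀ ω, Y ω = 0 ∨ Y ω = 1) : MemLp Y 2 μ :=
  (memLp_top_of_bound hY 1 <| ae_of_all _ fun ω => by
    rcases hval ω with h | h <;> simp [h]).mono_exponent le_top

theorem variance_sum_le_integral_sum_of_zero_or_one {ι : Type*} {X : ι → Ω → ℝ}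
    (hmeas : ∀ i, AEStronglyMeasurable (X i) μ) (hval : ∀ i ω, X i ω = 0 ∨ X i ω = 1)
    (hindep : iIndepFun X μ) (s : Finset ι) :
    Var[∑ i ∈ s, X i; μ] ≤ μ[∑ i ∈ s, X i] := by
  have hL2 i : MemLp (X i) 2 μ := memLp_two_of_zero_or_one (hmeas i) (hval i)
  rw [IndepFun.variance_sum (fun i _ => hL2 i) fun i _ j _ hij => hindep.indepFun hij]
  simp only [Finset.sum_apply]
  rw [integral_finsetSum _ fun i _ => (hL2 i).integrable one_le_two]
  exact sum_le_sum fun i _ => variance_le_integral_of_zero_or_one (hmeas i) (hval i)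

theorem measure_half_integral_le_abs_sub_integral_le {S : Ω → ℝ} (hS : MemLp S 2 μ)
    (hvar : Var[S; μ] ≤ μ[S]) (hpos : 0 < μ[S]) :
    μ {ω | μ[S] / 2 ≤ |S ω - μ[S]|} ≤ ENNReal.ofReal (4 / μ[S]) := by
  refine (meas_ge_le_variance_div_sq hS (half_pos hpos)).trans (ENNReal.ofReal_le_ofReal ?_)
  calc Var[S; μ] / (μ[S] / 2) ^ 2 ≤ μ[S] / (μ[S] / 2) ^ 2 := by gcongr
    _ = 4 / μ[S] := by field_simp; ring

theorem ae_eventually_abs_sub_integral_lt_half {S : ℕ → Ω → ℝ} (hS : ∀ j, MemLp (S j) 2 μ)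
    (hvar : ∀ j, Var[S j; μ] ≤ μ[S j]) (hpos : ∀ j, 0 < μ[S j])
    (hsum : Summable fun j => (μ[S j])⁻¹) :
    ∀ᵐ ω ∂μ, ∀ᶠ j in atTop, |S j ω - μ[S j]| < μ[S j] / 2 := by
  have hbad : ∑' j, μ {ω | μ[S j] / 2 ≤ |S j ω - μ[S j]|} ≠ ⊤ :=
    ne_top_of_le_ne_top (hsum.mul_left 4).tsum_ofReal_ne_top <| ENNReal.tsum_le_tsum fun j =>
      measure_half_integral_le_abs_sub_integral_le (hS j) (hvar j) (hpos j)
  filter_upwards [ae_eventually_notMem hbad] with ω hω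
  exact hω.mono fun j hj => not_le.1 hj

theorem ae_eventually_dyadic_bounds_sum_Icc {α : ℝ} (hα0 : 0 ≤ α) (hα1 : α < 1) {X : ℕ → Ω → ℝ}
    (hmeas : ∀ n, AEStronglyMeasurable (X n) μ) (hval : ∀ n ω, X n ω = 0 ∨ X n ω = 1)
    (hindep : iIndepFun X μ) (hexp : ∀ n : ℕ, 1 ≤ n → μ[X n] = (n : ℝ) ^ (-α)) :
    ∀ᵐ ω ∂μ, ∀ᶠ j in atTop,
      1 / 2 * ((2 ^ j : ℕ) : ℝ) ^ (1 - α) ≤ ∑ k ∈ Icc 1 (2 ^ j), X k ω ∧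
      ∑ k ∈ Icc 1 (2 ^ j), X k ω ≤ 3 / (2 * (1 - α)) * ((2 ^ j : ℕ) : ℝ) ^ (1 - α) := by
  have hp : 0 < 1 - α := by linarith
  set S : ℕ → Ω → ℝ := fun j => ∑ k ∈ Icc 1 (2 ^ j), X k
  have hmean j : μ[S j] = ∑ k ∈ Icc 1 (2 ^ j), ((k : ℕ) : ℝ) ^ (-α) := by
    simp only [S, Finset.sum_apply]
    rw [integral_finsetSum _ fun k _ => (memLp_two_of_zero_or_one (hmeas k) (hval k)).integrable
      one_le_two]
    exact sum_congr rfl fun k hk => hexp k (mem_Icc.1 hk).1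
  have hmean_ge j : ((2 ^ j : ℕ) : ℝ) ^ (1 - α) ≤ μ[S j] :=
    hmean j ▸ rpow_one_sub_le_sum_Icc_rpow_neg hα0 hα1 _
  have hmean_le j : μ[S j] ≤ ((2 ^ j : ℕ) : ℝ) ^ (1 - α) / (1 - α) :=
    hmean j ▸ sum_Icc_rpow_neg_le hα0 hα1 _
  have hpos j : 0 < μ[S j] := lt_of_lt_of_le (by positivity) (hmean_ge j)
  have hsum : Summable fun j => (μ[S j])⁻¹ := by
    have hr : 1 < (2 : ℝ) ^ (1 - α) := Real.one_lt_rpow one_lt_two hp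
    refine Summable.of_nonneg_of_le (fun j => (inv_pos.2 (hpos j)).le) (fun j => ?_)
      (summable_geometric_of_lt_one (by positivity) (inv_lt_one_of_one_lt₀ hr))
    calc (μ[S j])⁻¹ ≤ (((2 ^ j : ℕ) : ℝ) ^ (1 - α))⁻¹ := inv_anti₀ (by positivity) (hmean_ge j)
      _ = ((2 : ℝ) ^ (1 - α))⁻¹ ^ j := by
        rw [inv_pow, Real.rpow_pow_comm zero_le_two, Nat.cast_pow, Nat.cast_ofNat]
  filter_upwards [ae_eventually_abs_sub_integral_lt_half
    (fun j => memLp_finsetSum' _ fun k _ => memLp_two_of_zero_or_one (hmeas k) (hval k))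
    (fun j => variance_sum_le_integral_sum_of_zero_or_one hmeas hval hindep _) hpos hsum]
    with ω hω
  refine hω.mono fun j hj => ?_
  obtain ⟨hlow, hupp⟩ := abs_lt.1 hj
  have hge := hmean_ge j
  have hle := hmean_le j
  simp only [S, Finset.sum_apply] at hge hle hlow hupp
  have h3 : 3 / (2 * (1 - α)) * ((2 ^ j : ℕ) : ℝ) ^ (1 - α) =
      3 / 2 * (((2 ^ j : ℕ) : ℝ) ^ (1 - α) / (1 - α)) := by field_simp
  constructor
  · linarith
  · rw [h3]; linarith

end Concentration

/-- If `X n` are independent `{0,1}`-valued random variables with mean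
`n ^ (-α)` for `0 < α < 1`, and `a n ω` is the smallest `m` with
`X 1 ω + ⋯ + X m ω = n`, then almost surely there is `C > 0` with
`C⁻¹ * n ^ (1/(1-α)) ≤ a n ω ≤ C * n ^ (1/(1-α))` for all sufficiently large `n`. -/
theorem stmt0
    {Ω : Type*} [MeasureSpace Ω] [IsProbabilityMeasure (ℙ : Measure Ω)]
    (α : ℝ) (hα0 : 0 < α) (hα1 : α < 1)
    (X : ℕ → Ω → ℝ)
    (hmeas : ∀ n, Measurable (X n))
    (hval : ∀ n ω, X n ω = 0 ∨ X n ω = 1)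
    (hindep : iIndepFun X ℙ)
    (hexp : ∀ n, 1 ≤ n → ∫ ω, X n ω ∂ℙ = (n : ℝ) ^ (-α))
    (a : ℕ → Ω → ℕ)
    (ha : ∀ n ω, a n ω = sInf {m : ℕ | ∑ k ∈ Icc 1 m, X k ω = n}) :
    ∀ᵐ ω ∂ℙ, ∃ C > (0 : ℝ), ∀ᶠ n : ℕ in atTop,
      C⁻¹ * (n : ℝ) ^ ((1 : ℝ) / (1 - α)) ≤ (a n ω : ℝ) ∧
      (a n ω : ℝ) ≤ C * (n : ℝ) ^ ((1 : ℝ) / (1 - α)) := by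
  have hp : 0 < 1 - α := by linarith
  filter_upwards [ae_eventually_dyadic_bounds_sum_Icc hα0.le hα1
    (fun n => (hmeas n).aestronglyMeasurable) hval hindep hexp] with ω hω
  have hx0 k : 0 ≤ X k ω := by rcases hval k ω with h | h <;> simp [h]
  have hx1 k : X k ω ≤ 1 := by rcases hval k ω with h | h <;> simp [h]
  have hs := (monotone_sum_Icc hx0).eventually_rpow_bounds_of_dyadic hp.le
    (by linarith) (by norm_num) (by positivity) hω
  have hunbdd (n : ℕ) : ∃ m, (n : ℝ) ≤ ∑ k ∈ Icc 1 m, X k ω := by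
    have hgrow : Tendsto (fun m : ℕ => 1 / 2 / 2 * (m : ℝ) ^ (1 - α)) atTop atTop :=
      ((tendsto_rpow_atTop hp).comp tendsto_natCast_atTop_atTop).const_mul_atTop (by norm_num)
    obtain ⟨m, hm, hgm⟩ := (hs.and (hgrow.eventually_ge_atTop n)).exists
    exact ⟨m, hgm.trans hm.1⟩
  have hsa (n : ℕ) : ∑ k ∈ Icc 1 (a n ω), X k ω = n := by
    obtain ⟨m, hm⟩ := hunbdd n
    rw [ha]
    exact Nat.sInf_mem (exists_sum_Icc_eq_of_le (hval · ω) hm)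
  have ha_tend : Tendsto (a · ω) atTop atTop := tendsto_atTop_mono (fun n => by
    exact_mod_cast (hsa n).symm.le.trans (sum_Icc_le_self hx1 _)) tendsto_id
  exact exists_rpow_one_div_bounds_of_comp_eq_cast hp (by norm_num) (by positivity) hs hsa ha_tend
end

section
/- Let $Z_1,\dots,Z_n$ be a martingale difference sequence of real random variables with $|Z_i|\le 1$ almost surely, i.e. $\mathbb{E}(Z_i \mid Z_1,\dots,Z_{i-1})=0$ a.s. Let $V_i = \mathrm{Var}(Z_i\mid Z_1,\dots,Z_{i-1})$ and $T_n = \sum_{i=1}^n V_i$. Then for any $a,b>0$: $\mathbb{P}\big( |\sum_{i=1}^n Z_i| \ge a \text{ and } T_n \le b \big) \le 2 e^{-a^2/(2(a+b))}$. -/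
/-!
Put `l = a / (a + b)` and `c = l ^ 2 / (2 * (1 - l))`. For `|z| ≤ 1` one has
`exp (l * z) ≤ 1 + l * z + c * z ^ 2`, so the martingale property gives
`𝔼[exp (l * Z i) | G i] ≤ 1 + c * V i ≤ exp (c * V i)`. Hence `exp (l * S k - c * T k)`, with `S`
and `T` the partial sums of `Z` and `V`, is a supermartingale of mean at most `1`, and Markov's
inequality bounds the probability of `S n ≥ a, T n ≤ b` by `exp (c * b - l * a)`, which equals
`exp (-a ^ 2 / (2 * (a + b)))`. The same bound for `-Z` gives the factor `2`.
-/

open MeasureTheory ProbabilityTheory Finset Real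

lemma Real.exp_le_one_add_add_sq_div {x : ℝ} (hx : |x| < 1) :
    exp x ≤ 1 + x + x ^ 2 / (2 * (1 - |x|)) := by
  have h := Real.exp_bound hx.le (n := 3) (by norm_num)
  norm_num [Finset.sum_range_succ, Nat.factorial] at h
  have hrem : x ^ 2 / 2 + |x| ^ 3 * (2 / 9) ≤ x ^ 2 / (2 * (1 - |x|)) := by
    rw [le_div_iff₀ (by linarith), ← sq_abs x]
    nlinarith [abs_nonneg x, pow_nonneg (abs_nonneg x) 4]
  linarith [(abs_le.1 h).2]

lemma Real.exp_mul_le_one_add_mul_add_sq {l z : ℝ} (hl0 : 0 < l) (hl1 : l < 1) (hz : |z| ≤ 1) :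
    exp (l * z) ≤ 1 + l * z + l ^ 2 / (2 * (1 - l)) * z ^ 2 := by
  have hlz : |l * z| ≤ l := by
    rw [abs_mul, abs_of_pos hl0]; exact mul_le_of_le_one_right hl0.le hz
  calc exp (l * z) ≤ 1 + l * z + (l * z) ^ 2 / (2 * (1 - |l * z|)) :=
        Real.exp_le_one_add_add_sq_div (hlz.trans_lt hl1)
    _ ≤ 1 + l * z + (l * z) ^ 2 / (2 * (1 - l)) := by gcongr
    _ = 1 + l * z + l ^ 2 / (2 * (1 - l)) * z ^ 2 := by ring

section

variable {Ω : Type*} {m m0 : MeasurableSpace Ω} {μ : Measure Ω} [IsFiniteMeasure μ]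

lemma condExp_exp_mul_le (hm : m ≤ m0) {Y : Ω → ℝ} (hY : Measurable Y)
    (hYbdd : ∀ᵐ ω ∂μ, |Y ω| ≤ 1) (hY0 : μ[Y | m] =ᵐ[μ] 0) {l : ℝ} (hl0 : 0 < l) (hl1 : l < 1) :
    μ[fun ω => exp (l * Y ω) | m] ≤ᵐ[μ]
      fun ω => exp (l ^ 2 / (2 * (1 - l)) * μ[fun ω => Y ω ^ 2 | m] ω) := by
  set c := l ^ 2 / (2 * (1 - l))
  have hYint : Integrable Y μ :=
    .of_bound hY.aestronglyMeasurable 1 (by simpa only [Real.norm_eq_abs] using hYbdd)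
  have hY2int : Integrable (fun ω => Y ω ^ 2) μ := by
    refine .of_bound (hY.pow_const 2).aestronglyMeasurable 1 ?_
    filter_upwards [hYbdd] with ω hω
    rw [Real.norm_eq_abs, abs_pow]
    exact pow_le_one₀ (abs_nonneg _) hω
  have hexp : (fun ω => exp (l * Y ω)) ≤ᵐ[μ]
      (fun _ => (1 : ℝ)) + l • Y + c • fun ω => Y ω ^ 2 := by
    filter_upwards [hYbdd] with ω hω
    exact Real.exp_mul_le_one_add_mul_add_sq hl0 hl1 hω
  have hexp_int : Integrable (fun ω => exp (l * Y ω)) μ := by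
    refine .of_bound (hY.const_mul l).exp.aestronglyMeasurable (exp l) ?_
    filter_upwards [hYbdd] with ω hω
    rw [Real.norm_eq_abs, abs_exp, exp_le_exp]
    exact (le_abs_self _).trans (by rw [abs_mul, abs_of_pos hl0]; nlinarith [abs_nonneg (Y ω)])
  filter_upwards [condExp_mono hexp_int (((integrable_const 1).add (hYint.smul l)).add
      (hY2int.smul c)) hexp, condExp_add ((integrable_const 1).add (hYint.smul l))
      (hY2int.smul c) m, condExp_add (integrable_const 1) (hYint.smul l) m,
      condExp_smul l Y m, condExp_smul c (fun ω => Y ω ^ 2) m, hY0]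
    with ω hmono hadd hadd' hsmul hsmul' hzero
  rw [hadd, Pi.add_apply, hadd', Pi.add_apply, hsmul, hsmul', condExp_const hm] at hmono
  simp only [Pi.smul_apply, hzero, Pi.zero_apply, smul_eq_mul, mul_zero, add_zero] at hmono
  linarith [add_one_le_exp (c * μ[fun ω => Y ω ^ 2 | m] ω)]

lemma integral_exp_add_mul_le (hm : m ≤ m0) {W Y : Ω → ℝ} (hW : Measurable[m] W)
    (hWint : Integrable (fun ω => exp (W ω)) μ) (hY : Measurable Y)
    (hYbdd : ∀ᵐ ω ∂μ, |Y ω| ≤ 1) (hY0 : μ[Y | m] =ᵐ[μ] 0) {l : ℝ} (hl0 : 0 < l) (hl1 : l < 1) :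
    ∫ ω, exp (W ω + l * Y ω) ∂μ ≤
      ∫ ω, exp (W ω + l ^ 2 / (2 * (1 - l)) * μ[fun ω => Y ω ^ 2 | m] ω) ∂μ := by
  set c := l ^ 2 / (2 * (1 - l))
  set V := μ[fun ω => Y ω ^ 2 | m]
  have hV : ∀ᵐ ω ∂μ, |V ω| ≤ 1 := by
    refine ae_bdd_abs_condExp_of_ae_bdd_abs ?_
    filter_upwards [hYbdd] with ω hω
    rw [abs_pow]
    exact pow_le_one₀ (abs_nonneg _) hω
  have hexpV_bdd : ∀ᵐ ω ∂μ, ‖exp (c * V ω)‖ ≤ exp c := by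
    filter_upwards [hV] with ω hω
    rw [Real.norm_eq_abs, abs_exp, exp_le_exp]
    have hc : 0 ≤ c := by have := sq_nonneg l; positivity
    nlinarith [le_abs_self (V ω)]
  have hexpY_bdd : ∀ᵐ ω ∂μ, ‖exp (l * Y ω)‖ ≤ exp l := by
    filter_upwards [hYbdd] with ω hω
    rw [Real.norm_eq_abs, abs_exp, exp_le_exp]
    nlinarith [le_abs_self (Y ω)]
  have hexpY_int : Integrable (fun ω => exp (l * Y ω)) μ :=
    .of_bound (hY.const_mul l).exp.aestronglyMeasurable _ hexpY_bdd
  have hpull := condExp_mul_of_stronglyMeasurable_left (m := m) hW.exp.stronglyMeasurable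
    (hWint.mul_bdd (hY.const_mul l).exp.aestronglyMeasurable hexpY_bdd) hexpY_int
  calc ∫ ω, exp (W ω + l * Y ω) ∂μ = ∫ ω, μ[fun ω => exp (W ω) * exp (l * Y ω) | m] ω ∂μ := by
        simp only [exp_add]; exact (integral_condExp hm).symm
    _ ≤ ∫ ω, exp (W ω) * exp (c * V ω) ∂μ := by
        refine integral_mono_ae integrable_condExp (hWint.mul_bdd ?_ hexpV_bdd) ?_
        · exact ((stronglyMeasurable_condExp.mono hm).measurable.const_mul c).exp
            |>.aestronglyMeasurable
        · filter_upwards [hpull, condExp_exp_mul_le hm hY hYbdd hY0 hl0 hl1] with ω hpull hle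
          exact hpull.trans_le (mul_le_mul_of_nonneg_left hle (exp_nonneg _))
    _ = ∫ ω, exp (W ω + c * V ω) ∂μ := by simp only [exp_add]

end

section

variable {Ω : Type*} [m0 : MeasurableSpace Ω] {μ : Measure Ω} {G : ℕ → MeasurableSpace Ω}
  {Z : ℕ → Ω → ℝ} {n : ℕ}

lemma integrable_exp_mul_sum_sub_mul_sum [IsFiniteMeasure μ] (hGle : ∀ i, G i ≤ m0)
    (hadapt : ∀ i ∈ Icc 1 n, Measurable[G (i + 1)] (Z i))
    (hbdd : ∀ i ∈ Icc 1 n, ∀ᵐ ω ∂μ, |Z i ω| ≤ 1) {l c : ℝ} (hl : 0 ≤ l) (hc : 0 ≤ c)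
    {j k : ℕ} (hk : k ≤ n) :
    Integrable (fun ω => exp (l * ∑ i ∈ Icc 1 k, Z i ω -
      c * ∑ i ∈ Icc 1 j, μ[fun ω => Z i ω ^ 2 | G i] ω)) μ := by
  have hZ : ∀ i ∈ Icc 1 k, Measurable (Z i) := fun i hi =>
    (hadapt i (Icc_subset_Icc_right hk hi)).mono (hGle _) le_rfl
  have hmeas : Measurable fun ω => l * ∑ i ∈ Icc 1 k, Z i ω -
      c * ∑ i ∈ Icc 1 j, μ[fun ω => Z i ω ^ 2 | G i] ω :=
    ((Finset.measurable_sum _ hZ).const_mul l).sub ((Finset.measurable_sum _ fun i _ =>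
      (stronglyMeasurable_condExp.mono (hGle i)).measurable).const_mul c)
  refine .of_bound hmeas.exp.aestronglyMeasurable (exp (l * k)) ?_
  have hZle : ∀ᵐ ω ∂μ, ∀ i ∈ Icc 1 k, Z i ω ≤ 1 := by
    rw [Filter.eventually_all_finset]
    exact fun i hi => (hbdd i (Icc_subset_Icc_right hk hi)).mono fun ω hω => (abs_le.1 hω).2
  have hVnonneg : ∀ᵐ ω ∂μ, ∀ i ∈ Icc 1 j, 0 ≤ μ[fun ω => Z i ω ^ 2 | G i] ω := by
    rw [Filter.eventually_all_finset]
    exact fun i _ => condExp_nonneg (ae_of_all _ fun ω => sq_nonneg _)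
  filter_upwards [hZle, hVnonneg] with ω hZω hVω
  rw [Real.norm_eq_abs, abs_exp, exp_le_exp]
  have hS : ∑ i ∈ Icc 1 k, Z i ω ≤ k := by
    simpa using sum_le_card_nsmul _ _ 1 hZω
  nlinarith [sum_nonneg hVω]

lemma integral_exp_mul_sum_sub_mul_sum_le_one [IsProbabilityMeasure μ] (hGle : ∀ i, G i ≤ m0)
    (hGmono : Monotone G) (hadapt : ∀ i ∈ Icc 1 n, Measurable[G (i + 1)] (Z i))
    (hbdd : ∀ i ∈ Icc 1 n, ∀ᵐ ω ∂μ, |Z i ω| ≤ 1) (hmart : ∀ i ∈ Icc 1 n, μ[Z i | G i] =ᵐ[μ] 0)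
    {l : ℝ} (hl0 : 0 < l) (hl1 : l < 1) {k : ℕ} (hk : k ≤ n) :
    ∫ ω, exp (l * ∑ i ∈ Icc 1 k, Z i ω -
      l ^ 2 / (2 * (1 - l)) * ∑ i ∈ Icc 1 k, μ[fun ω => Z i ω ^ 2 | G i] ω) ∂μ ≤ 1 := by
  induction k with
  | zero => simp
  | succ k ih =>
    set c := l ^ 2 / (2 * (1 - l))
    have hmem : k + 1 ∈ Icc 1 n := mem_Icc.2 ⟨by omega, hk⟩
    have hW : Measurable[G (k + 1)] fun ω => l * ∑ i ∈ Icc 1 k, Z i ω -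
        c * ∑ i ∈ Icc 1 (k + 1), μ[fun ω => Z i ω ^ 2 | G i] ω := by
      refine ((Finset.measurable_sum _ fun i hi => ?_).const_mul l).sub
        ((Finset.measurable_sum _ fun i hi => ?_).const_mul c) <;> rw [mem_Icc] at hi
      · exact (hadapt i (mem_Icc.2 ⟨hi.1, by omega⟩)).mono (hGmono (by omega)) le_rfl
      · exact (stronglyMeasurable_condExp.mono (hGmono hi.2)).measurable
    have hc : 0 ≤ c := by have := sq_nonneg l; positivity
    calc _ = ∫ ω, exp ((l * ∑ i ∈ Icc 1 k, Z i ω -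
            c * ∑ i ∈ Icc 1 (k + 1), μ[fun ω => Z i ω ^ 2 | G i] ω) + l * Z (k + 1) ω) ∂μ := by
          simp only [sum_Icc_succ_top (by omega : 1 ≤ k + 1)]
          ring_nf
      _ ≤ ∫ ω, exp ((l * ∑ i ∈ Icc 1 k, Z i ω -
            c * ∑ i ∈ Icc 1 (k + 1), μ[fun ω => Z i ω ^ 2 | G i] ω) +
            c * μ[fun ω => Z (k + 1) ω ^ 2 | G (k + 1)] ω) ∂μ :=
          integral_exp_add_mul_le (hGle _) hW
            (integrable_exp_mul_sum_sub_mul_sum hGle hadapt hbdd hl0.le hc (by omega))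
            ((hadapt _ hmem).mono (hGle _) le_rfl) (hbdd _ hmem) (hmart _ hmem) hl0 hl1
      _ = _ := by
          simp only [sum_Icc_succ_top (by omega : 1 ≤ k + 1)]
          ring_nf
      _ ≤ 1 := ih (by omega)

lemma measure_le_sum_and_sum_condExp_sq_le [IsProbabilityMeasure μ] (hGle : ∀ i, G i ≤ m0)
    (hGmono : Monotone G) (hadapt : ∀ i ∈ Icc 1 n, Measurable[G (i + 1)] (Z i))
    (hbdd : ∀ i ∈ Icc 1 n, ∀ᵐ ω ∂μ, |Z i ω| ≤ 1) (hmart : ∀ i ∈ Icc 1 n, μ[Z i | G i] =ᵐ[μ] 0)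
    {a b : ℝ} (ha : 0 < a) (hb : 0 < b) :
    μ {ω | a ≤ ∑ i ∈ Icc 1 n, Z i ω ∧ ∑ i ∈ Icc 1 n, μ[fun ω => Z i ω ^ 2 | G i] ω ≤ b} ≤
      ENNReal.ofReal (exp (-a ^ 2 / (2 * (a + b)))) := by
  set l := a / (a + b)
  have hl0 : 0 < l := by positivity
  have hl1 : l < 1 := (div_lt_one (by positivity)).2 (by linarith)
  set c := l ^ 2 / (2 * (1 - l))
  have hc : 0 ≤ c := by have := sq_nonneg l; positivity
  set X := fun ω => l * ∑ i ∈ Icc 1 n, Z i ω - c * ∑ i ∈ Icc 1 n, μ[fun ω => Z i ω ^ 2 | G i] ω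
  have hsub : {ω | a ≤ ∑ i ∈ Icc 1 n, Z i ω ∧
      ∑ i ∈ Icc 1 n, μ[fun ω => Z i ω ^ 2 | G i] ω ≤ b} ⊆ {ω | l * a - c * b ≤ X ω} := by
    rintro ω ⟨hS, hT⟩
    have := mul_le_mul_of_nonneg_left hS hl0.le
    have := mul_le_mul_of_nonneg_left hT hc
    show l * a - c * b ≤ X ω
    simp only [X]
    linarith
  have hmgf : mgf X μ 1 ≤ 1 := by
    simpa only [mgf, one_mul] using
      integral_exp_mul_sum_sub_mul_sum_le_one hGle hGmono hadapt hbdd hmart hl0 hl1 le_rfl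
  have hchernoff := measure_ge_le_exp_mul_mgf (X := X) (μ := μ) (l * a - c * b) zero_le_one
    (by simpa only [one_mul] using
      integrable_exp_mul_sum_sub_mul_sum hGle hadapt hbdd hl0.le hc le_rfl)
  have hexponent : -1 * (l * a - c * b) = -a ^ 2 / (2 * (a + b)) := by
    have : 1 - l = b / (a + b) := by simp only [l]; field_simp; ring
    simp only [c, this, l]
    field_simp
    ring
  calc _ ≤ μ {ω | l * a - c * b ≤ X ω} := measure_mono hsub
    _ = ENNReal.ofReal (μ.real {ω | l * a - c * b ≤ X ω}) := (ofReal_measureReal).symm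
    _ ≤ _ := by
        refine ENNReal.ofReal_le_ofReal (hchernoff.trans ?_)
        rw [hexponent]
        exact mul_le_of_le_one_right (exp_nonneg _) hmgf

lemma measure_le_abs_sum_and_sum_condExp_sq_le [IsProbabilityMeasure μ] (hGle : ∀ i, G i ≤ m0)
    (hGmono : Monotone G) (hadapt : ∀ i ∈ Icc 1 n, Measurable[G (i + 1)] (Z i))
    (hbdd : ∀ i ∈ Icc 1 n, ∀ᵐ ω ∂μ, |Z i ω| ≤ 1) (hmart : ∀ i ∈ Icc 1 n, μ[Z i | G i] =ᵐ[μ] 0)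
    {a b : ℝ} (ha : 0 < a) (hb : 0 < b) :
    μ {ω | a ≤ |∑ i ∈ Icc 1 n, Z i ω| ∧ ∑ i ∈ Icc 1 n, μ[fun ω => Z i ω ^ 2 | G i] ω ≤ b} ≤
      ENNReal.ofReal (2 * exp (-a ^ 2 / (2 * (a + b)))) := by
  have hupper := measure_le_sum_and_sum_condExp_sq_le hGle hGmono hadapt hbdd hmart ha hb
  have hlower := measure_le_sum_and_sum_condExp_sq_le (Z := fun i ω => -Z i ω) hGle hGmono
    (fun i hi => (hadapt i hi).neg) (by simpa only [abs_neg] using hbdd)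
    (fun i hi => (condExp_neg (Z i) (G i)).trans ((hmart i hi).mono fun ω h => by simp [h]))
    ha hb
  simp only [neg_sq, sum_neg_distrib] at hlower
  calc _ ≤ μ ({ω | a ≤ ∑ i ∈ Icc 1 n, Z i ω ∧
          ∑ i ∈ Icc 1 n, μ[fun ω => Z i ω ^ 2 | G i] ω ≤ b} ∪
        {ω | a ≤ -∑ i ∈ Icc 1 n, Z i ω ∧ ∑ i ∈ Icc 1 n, μ[fun ω => Z i ω ^ 2 | G i] ω ≤ b}) :=
        measure_mono <| by
          rintro ω ⟨hS, hT⟩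
          exact (le_abs.1 hS).imp (⟨·, hT⟩) (⟨·, hT⟩)
    _ ≤ _ := (measure_union_le _ _).trans (add_le_add hupper hlower)
    _ = _ := by rw [← ENNReal.ofReal_add (exp_nonneg _) (exp_nonneg _), ← two_mul]

end

/-- Freedman's martingale inequality (special case).
If `Z 1, …, Z n` is a martingale difference sequence with `|Z i| ≤ 1` a.s.
(`𝔼(Z i ∣ Z 1, …, Z (i-1)) = 0` a.s.), `V i` is the conditional variance of `Z i`
given `Z 1, …, Z (i-1)` and `T = ∑ i ≤ n, V i`, then for all `a b > 0`,
`ℙ(|∑ i ≤ n, Z i| ≥ a and T ≤ b) ≤ 2 exp(-a²/(2(a+b)))`. -/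
theorem stmt3
    {Ω : Type*} [MeasureSpace Ω] [IsProbabilityMeasure (ℙ : Measure Ω)]
    (n : ℕ) (Z : ℕ → Ω → ℝ)
    (hmeas : ∀ i, Measurable (Z i))
    (hbdd : ∀ i ∈ Icc 1 n, ∀ᵐ ω ∂ℙ, |Z i ω| ≤ 1)
    (G : ℕ → MeasurableSpace Ω)
    (hG : ∀ i, G i = ⨆ j ∈ Icc 1 (i - 1), MeasurableSpace.comap (Z j) inferInstance)
    (hmart : ∀ i ∈ Icc 1 n, (ℙ[Z i | G i]) =ᵐ[ℙ] 0)
    (V : ℕ → Ω → ℝ)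
    (hV : ∀ i, V i = ℙ[fun ω => (Z i ω) ^ 2 | G i])
    (a b : ℝ) (ha : 0 < a) (hb : 0 < b) :
    ℙ {ω | a ≤ |∑ i ∈ Icc 1 n, Z i ω| ∧ ∑ i ∈ Icc 1 n, V i ω ≤ b} ≤
      ENNReal.ofReal (2 * Real.exp (-a ^ 2 / (2 * (a + b)))) := by
  obtain rfl : V = fun i => ℙ[fun ω => Z i ω ^ 2 | G i] := funext hV
  have hGle : ∀ i, G i ≤ MeasureSpace.toMeasurableSpace := fun i =>
    hG i ▸ iSup₂_le fun j _ => (hmeas j).comap_le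
  have hGmono : Monotone G := fun i k hik => by
    rw [hG i, hG k]
    exact biSup_mono fun j hj => Icc_subset_Icc_right (Nat.sub_le_sub_right hik 1) hj
  have hadapt : ∀ i ∈ Icc 1 n, Measurable[G (i + 1)] (Z i) := fun i hi => by
    rw [hG]
    exact measurable_iff_comap_le.2 <| le_biSup (fun j => MeasurableSpace.comap (Z j) _)
      (by simpa using (mem_Icc.1 hi).1)
  exact measure_le_abs_sum_and_sum_condExp_sq_le hGle hGmono hadapt hbdd hmart ha hb
end
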